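/- Let X be a non-empty compact subset of ℝ^d with diameter diam(X) = sup_{x,y∈X} ‖x−y‖. Then there exists x̄ ∈ ℝ^d such that X is contained in the closed Euclidean ball of radius diam(X)·√d/√(2d+2) centered at x̄, and consequently X ⊆ Π_{i=1}^d [x̄_i − d·diam(X)/√(2d+2), x̄_i + d·diam(X)/√(2d+2)]. -/

import Mathlib

/-!
Closed balls of radius `ρ = diam X · √d / √(2d + 2)` around the points of `X` are compact and
convex, so by Helly's theorem it suffices that any `d + 1` of them meet, i.e. that every set `S`
of at most `d + 1` points of `X` lies in a ball of radius `ρ`. Let `c` be the center of the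
smallest ball enclosing `S`: minimality forces `c = ∑ wᵢ xᵢ` to be a convex combination of the
points `xᵢ` of `S` at maximal distance `r` from `c`. The parallel axis identity gives
`∑ᵢ wᵢ ‖xᵢ - xⱼ‖² = 2r²` for every such `xⱼ`, while the left side is at most
`(1 - wⱼ) diam²`; averaging over `j` yields `2r² ≤ (1 - ∑ wⱼ²) diam² ≤ (1 - 1/(d+1)) diam²`.
The cube bound then follows from `|xᵢ - cᵢ| ≤ ‖x - c‖` and `√d ≤ d`.
-/

open Finset Metric Module Filter Topology RealInnerProductSpace

section InnerProductSpace

variable {E : Type*} [NormedAddCommGroup E] [InnerProductSpace ℝ E]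

theorem dist_add_smul_lt_of_sq_norm_le_inner {x c v : E} (hv : v ≠ 0)
    (hxv : ‖v‖ ^ 2 ≤ ⟪x - c, v⟫) {δ : ℝ} (hδ : δ ∈ Set.Ioo 0 2) :
    dist x (c + δ • v) < dist x c := by
  have hsq : dist x (c + δ • v) ^ 2 = dist x c ^ 2 - 2 * δ * ⟪x - c, v⟫ + δ ^ 2 * ‖v‖ ^ 2 := by
    rw [dist_eq_norm, dist_eq_norm, show x - (c + δ • v) = (x - c) - δ • v by abel,
      norm_sub_sq_real, real_inner_smul_right, norm_smul, mul_pow, Real.norm_eq_abs, sq_abs]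
    ring
  refine lt_of_pow_lt_pow_left₀ 2 dist_nonneg ?_
  rw [hsq]
  have hgain : 0 < δ * (2 - δ) * ‖v‖ ^ 2 := by
    have := hδ.1; have := hδ.2; positivity
  nlinarith [mul_le_mul_of_nonneg_left hxv (by linarith [hδ.1] : 0 ≤ 2 * δ)]

theorem exists_sq_norm_sub_le_inner_of_notMem {H : Set E} (hne : H.Nonempty)
    (hcomplete : IsComplete H) (hconvex : Convex ℝ H) {c : E} (hc : c ∉ H) :
    ∃ p ∈ H, p ≠ c ∧ ∀ x ∈ H, ‖p - c‖ ^ 2 ≤ ⟪x - c, p - c⟫ := by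
  obtain ⟨p, hpH, hpmin⟩ := exists_norm_eq_iInf_of_complete_convex hne hcomplete hconvex c
  have hproj := (norm_eq_iInf_iff_real_inner_le_zero hconvex hpH).1 hpmin
  refine ⟨p, hpH, fun h => hc (h ▸ hpH), fun x hx => ?_⟩
  have hsplit : ⟪x - c, p - c⟫ = ‖p - c‖ ^ 2 - ⟪c - p, x - p⟫ := by
    rw [show x - c = (x - p) + (p - c) by abel, inner_add_left, real_inner_self_eq_norm_sq,
      show p - c = -(c - p) by abel, inner_neg_right, real_inner_comm]
    ring
  linarith [hproj x hx]

theorem mem_convexHull_farthest_of_isMinOn {S : Finset E} (hS : S.Nonempty) {c : E}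
    (hcS : c ∈ convexHull ℝ ↑S)
    (hmin : IsMinOn (fun c => S.sup' hS (dist · c)) (convexHull ℝ ↑S) c) :
    c ∈ convexHull ℝ ↑{x ∈ S | dist x c = S.sup' hS (dist · c)} := by
  set r := S.sup' hS (dist · c)
  set T := {x ∈ S | dist x c = r}
  by_contra hcT
  have hTne : T.Nonempty := by
    obtain ⟨x, hx, hxr⟩ := exists_mem_eq_sup' hS (dist · c)
    exact ⟨x, mem_filter.2 ⟨hx, hxr.symm⟩⟩
  obtain ⟨p, hpT, hpc, hinner⟩ := exists_sq_norm_sub_le_inner_of_notMem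
    ((coe_nonempty.2 hTne).convexHull (𝕜 := ℝ))
    (T.finite_toSet.isCompact_convexHull (𝕜 := ℝ)).isComplete (convex_convexHull ℝ _) hcT
  have hv : p - c ≠ 0 := sub_ne_zero.2 hpc
  -- `p` is the projection of `c` onto the hull of the farthest points; moving `c` slightly
  -- towards `p` strictly decreases its distance to every point of `S`.
  have hcloser : ∀ᶠ δ in 𝓝[>] (0 : ℝ), ∀ x ∈ S, dist x (c + δ • (p - c)) < r := by
    refine (eventually_all_finset S).2 fun x hx => ?_
    rcases (show dist x c ≤ r from le_sup' (fun x => dist x c) hx).eq_or_lt with hxr | hxr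
    · filter_upwards [Ioo_mem_nhdsGT (two_pos : (0 : ℝ) < 2)] with δ hδ
      rw [← hxr]
      exact dist_add_smul_lt_of_sq_norm_le_inner hv
        (hinner x (subset_convexHull ℝ _ (mem_filter.2 ⟨hx, hxr⟩))) hδ
    · have hcont : Continuous fun δ : ℝ => dist x (c + δ • (p - c)) := by fun_prop
      exact nhdsWithin_le_nhds ((hcont.tendsto' 0 _ (by simp)).eventually (gt_mem_nhds hxr))
  obtain ⟨δ, hδr, hδ⟩ := (hcloser.and (Ioo_mem_nhdsGT (one_pos : (0 : ℝ) < 1))).exists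
  have hmem : c + δ • (p - c) ∈ convexHull ℝ ↑S :=
    (convex_convexHull ℝ _).add_smul_sub_mem hcS
      (convexHull_mono (coe_subset.2 (filter_subset _ _)) hpT) ⟨hδ.1.le, hδ.2.le⟩
  exact (hmin hmem).not_gt ((sup'_lt_iff hS).2 hδr)

theorem exists_mem_convexHull_farthest (S : Finset E) (hS : S.Nonempty) :
    ∃ c r, (∀ x ∈ S, dist x c ≤ r) ∧ c ∈ convexHull ℝ ↑{x ∈ S | dist x c = r} := by
  obtain ⟨c, hcS, hmin⟩ := (S.finite_toSet.isCompact_convexHull (𝕜 := ℝ)).exists_isMinOn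
    ((coe_nonempty.2 hS).convexHull (𝕜 := ℝ))
    (Continuous.finset_sup'_apply hS fun x _ => continuous_const.dist continuous_id).continuousOn
  exact ⟨c, _, fun x hx => le_sup' (dist · c) hx, mem_convexHull_farthest_of_isMinOn hS hcS hmin⟩

theorem sum_mul_norm_sub_sq_eq_add {T : Finset E} {w : E → ℝ} (hw1 : ∑ y ∈ T, w y = 1)
    {c : E} (hc : ∑ y ∈ T, w y • y = c) (j : E) :
    ∑ i ∈ T, w i * ‖i - j‖ ^ 2 = ∑ i ∈ T, w i * ‖i - c‖ ^ 2 + ‖j - c‖ ^ 2 := by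
  have hbalance : ∑ i ∈ T, w i * ⟪i - c, j - c⟫ = 0 := by
    have : ∑ i ∈ T, w i • (i - c) = 0 := by
      simp only [smul_sub, sum_sub_distrib, ← sum_smul, hc, hw1, one_smul, sub_self]
    simp only [← real_inner_smul_left, ← sum_inner, this, inner_zero_left]
  have hexpand : ∀ i ∈ T, w i * ‖i - j‖ ^ 2
      = w i * ‖i - c‖ ^ 2 + w i * ‖j - c‖ ^ 2 - 2 * (w i * ⟪i - c, j - c⟫) := by
    intro i _
    rw [show i - j = (i - c) - (j - c) by abel, norm_sub_sq_real]
    ring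
  rw [sum_congr rfl hexpand, sum_sub_distrib, sum_add_distrib, ← mul_sum, hbalance,
    ← sum_mul, hw1]
  ring

theorem two_mul_sq_le_of_sum_smul_eq {T : Finset E} {w : E → ℝ} (hw0 : ∀ y ∈ T, 0 ≤ w y)
    (hw1 : ∑ y ∈ T, w y = 1) {c : E} (hc : ∑ y ∈ T, w y • y = c) {r D : ℝ}
    (hr : ∀ y ∈ T, dist y c = r) (hD : ∀ x ∈ T, ∀ y ∈ T, dist x y ≤ D) :
    2 * r ^ 2 ≤ (1 - ∑ y ∈ T, w y ^ 2) * D ^ 2 := by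
  classical
  have hsum_eq : ∀ j ∈ T, ∑ i ∈ T, w i * ‖i - j‖ ^ 2 = 2 * r ^ 2 := by
    intro j hj
    rw [sum_mul_norm_sub_sq_eq_add hw1 hc j]
    simp only [← dist_eq_norm]
    rw [hr j hj, sum_congr rfl fun i hi => by rw [hr i hi], ← sum_mul, hw1]
    ring
  have hsum_le : ∀ j ∈ T, ∑ i ∈ T, w i * ‖i - j‖ ^ 2 ≤ (1 - w j) * D ^ 2 := by
    intro j hj
    rw [← sum_erase_add _ _ hj, sub_self, norm_zero, sq, mul_zero, mul_zero, add_zero,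
      ← hw1, ← sum_erase_eq_sub hj, sum_mul]
    refine sum_le_sum fun i hi => mul_le_mul_of_nonneg_left ?_ (hw0 i (mem_of_mem_erase hi))
    rw [← dist_eq_norm]
    exact pow_le_pow_left₀ dist_nonneg (hD i (mem_of_mem_erase hi) j hj) 2
  calc 2 * r ^ 2 = ∑ j ∈ T, w j * (2 * r ^ 2) := by rw [← sum_mul, hw1, one_mul]
    _ ≤ ∑ j ∈ T, w j * ((1 - w j) * D ^ 2) :=
      sum_le_sum fun j hj => mul_le_mul_of_nonneg_left (hsum_eq j hj ▸ hsum_le j hj) (hw0 j hj)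
    _ = (1 - ∑ y ∈ T, w y ^ 2) * D ^ 2 := by
      simp only [← mul_assoc, ← sum_mul, mul_one_sub, sum_sub_distrib, hw1, sq]

theorem exists_dist_le_mul_sqrt_of_card_le {S : Finset E} {n : ℕ} (hcard : #S ≤ n + 1) {D : ℝ}
    (hD : ∀ x ∈ S, ∀ y ∈ S, dist x y ≤ D) :
    ∃ c, ∀ x ∈ S, dist x c ≤ D * √n / √(2 * n + 2) := by
  rcases S.eq_empty_or_nonempty with rfl | hS
  · exact ⟨0, by simp⟩
  obtain ⟨c, r, hr, hcT⟩ := exists_mem_convexHull_farthest S hS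
  obtain ⟨w, hw0, hw1, hwc⟩ := mem_convexHull'.1 hcT
  have hTS : {x ∈ S | dist x c = r} ⊆ S := filter_subset _ _
  have hjung := two_mul_sq_le_of_sum_smul_eq hw0 hw1 hwc (fun y hy => (mem_filter.1 hy).2)
    fun x hx y hy => hD x (hTS hx) y (hTS hy)
  have hcs : 1 ≤ (n + 1) * ∑ y ∈ {x ∈ S | dist x c = r}, w y ^ 2 := by
    have hchebyshev := sq_sum_le_card_mul_sum_sq (s := {x ∈ S | dist x c = r}) (f := w)
    have hcardT : (#{x ∈ S | dist x c = r} : ℝ) ≤ n + 1 := by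
      exact_mod_cast (card_le_card hTS).trans hcard
    rw [hw1] at hchebyshev
    nlinarith [sum_nonneg fun y (_ : y ∈ {x ∈ S | dist x c = r}) => sq_nonneg (w y)]
  obtain ⟨x₀, hx₀⟩ := hS
  have hD0 : 0 ≤ D := (dist_self x₀).symm.le.trans (hD x₀ hx₀ x₀ hx₀)
  have hr_le : r ≤ D * √n / √(2 * n + 2) := by
    rw [le_div_iff₀ (by positivity)]
    refine le_of_pow_le_pow_left₀ two_ne_zero (by positivity) ?_
    rw [mul_pow, mul_pow, Real.sq_sqrt (by positivity), Real.sq_sqrt (by positivity)]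
    nlinarith [mul_le_mul_of_nonneg_left hjung (by positivity : (0 : ℝ) ≤ n + 1),
      mul_le_mul_of_nonneg_right hcs (sq_nonneg D)]
  exact ⟨c, fun x hx => (hr x hx).trans hr_le⟩

theorem exists_subset_closedBall_diam_mul_sqrt [FiniteDimensional ℝ E] {X : Set E}
    (hX : Bornology.IsBounded X) :
    ∃ c, X ⊆ closedBall c (diam X * √(finrank ℝ E) / √(2 * finrank ℝ E + 2)) := by
  classical
  obtain ⟨c, hc⟩ := Convex.helly_theorem_compact' (𝕜 := ℝ)
    (F := fun x : X => closedBall (x : E) (diam X * √(finrank ℝ E) / √(2 * finrank ℝ E + 2)))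
    (fun _ => convex_closedBall _ _) (fun _ => isCompact_closedBall _ _) fun I hI => by
      have hIX : ∀ x ∈ I.image Subtype.val, x ∈ X := by simp +contextual
      obtain ⟨c, hc⟩ := exists_dist_le_mul_sqrt_of_card_le (card_image_le.trans hI)
        fun x hx y hy => dist_le_diam_of_mem hX (hIX x hx) (hIX y hy)
      exact ⟨c, Set.mem_iInter₂.2 fun x hx => mem_closedBall_comm.1 (hc x (mem_image_of_mem _ hx))⟩
  exact ⟨c, fun x hx => mem_closedBall_comm.1 (Set.mem_iInter.1 hc ⟨x, hx⟩)⟩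

end InnerProductSpace

theorem stmt12_general {d : ℕ} (X : Set (EuclideanSpace ℝ (Fin d)))
    (hXcpt : IsCompact X) :
    ∃ c : EuclideanSpace ℝ (Fin d),
      X ⊆ Metric.closedBall c (Metric.diam X * Real.sqrt d / Real.sqrt (2 * d + 2)) ∧
      ∀ x ∈ X, ∀ i : Fin d,
        |x i - c i| ≤ d * Metric.diam X / Real.sqrt (2 * d + 2) := by
  obtain ⟨c, hc⟩ := exists_subset_closedBall_diam_mul_sqrt hXcpt.isBounded
  rw [finrank_euclideanSpace_fin] at hc
  refine ⟨c, hc, fun x hx i => ?_⟩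
  have hsqrt : √(d : ℝ) ≤ d :=
    (Real.sqrt_le_left d.cast_nonneg).2 (by exact_mod_cast Nat.le_self_pow two_ne_zero d)
  calc |x i - c i| = ‖(x - c) i‖ := by simp [Real.norm_eq_abs]
    _ ≤ dist x c := PiLp.norm_apply_le _ _
    _ ≤ diam X * √d / √(2 * d + 2) := hc hx
    _ ≤ d * diam X / √(2 * d + 2) := by
      rw [mul_comm (d : ℝ)]
      gcongr

/-- Jung's theorem in `ℝ^d` plus the norm comparison: a nonempty compact
`X ⊆ ℝ^d` is contained in a closed Euclidean ball of radius `diam(X)·√d/√(2d+2)`, and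
hence in the cube of half-width `d·diam(X)/√(2d+2)` around the same center. -/
theorem stmt12 {d : ℕ} (hd : 0 < d) (X : Set (EuclideanSpace ℝ (Fin d)))
    (hXne : X.Nonempty) (hXcpt : IsCompact X) :
    ∃ c : EuclideanSpace ℝ (Fin d),
      X ⊆ Metric.closedBall c (Metric.diam X * Real.sqrt d / Real.sqrt (2 * d + 2)) ∧
      ∀ x ∈ X, ∀ i : Fin d,
        |x i - c i| ≤ d * Metric.diam X / Real.sqrt (2 * d + 2) :=
  stmt12_general X hXcpt
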